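/- Let A be a congruence-distributive algebra. Then A has the FCLP if and only if A is FC-normal. -/

import Mathlib

/-! Universal-algebra framework: algebras over a signature, congruences,
factor congruences, lifting properties. -/

structure Signature where
  ops : Type
  arity : ops → ℕ

structure Alg (σ : Signature) where
  carrier : Type
  interp : ∀ f : σ.ops, (Fin (σ.arity f) → carrier) → carrier

namespace Alg

variable {σ : Signature}

/-- A congruence: an equivalence relation compatible with all operations. -/
def IsCon (A : Alg σ) (r : A.carrier → A.carrier → Prop) : Prop :=
  Equivalence r ∧
    ∀ (f : σ.ops) (x y : Fin (σ.arity f) → A.carrier),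
      (∀ i, r (x i) (y i)) → r (A.interp f x) (A.interp f y)

/-- The least congruence `Δ_A`. -/
def delta (A : Alg σ) : A.carrier → A.carrier → Prop := fun a b => a = b

/-- The greatest congruence `∇_A = A²`. -/
def nabla (A : Alg σ) : A.carrier → A.carrier → Prop := fun _ _ => True

/-- Meet (intersection) of congruences. -/
def conMeet (A : Alg σ) (r s : A.carrier → A.carrier → Prop) :
    A.carrier → A.carrier → Prop := fun a b => r a b ∧ s a b

/-- Join of congruences: the least congruence containing both. -/
def conJoin (A : Alg σ) (r s : A.carrier → A.carrier → Prop) :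
    A.carrier → A.carrier → Prop := fun a b =>
  ∀ t, A.IsCon t → (∀ x y, r x y → t x y) → (∀ x y, s x y → t x y) → t a b

/-- The congruence generated by a set of pairs. -/
def conGen (A : Alg σ) (X : Set (A.carrier × A.carrier)) :
    A.carrier → A.carrier → Prop := fun a b =>
  ∀ t, A.IsCon t → (∀ p ∈ X, t p.1 p.2) → t a b

/-- Composition of relations: `(a,b) ∈ comp r s` iff `(a,x) ∈ s` and `(x,b) ∈ r`
for some `x`. -/
def comp (A : Alg σ) (r s : A.carrier → A.carrier → Prop) :
    A.carrier → A.carrier → Prop := fun a b => ∃ x, s a x ∧ r x b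

/-- Factor congruences: congruences `φ` having a congruence `φ*` with
`φ ∨ φ* = ∇`, `φ ∩ φ* = Δ` and `φ ∘ φ* = φ* ∘ φ`. -/
def IsFC (A : Alg σ) (φ : A.carrier → A.carrier → Prop) : Prop :=
  A.IsCon φ ∧ ∃ ψ, A.IsCon ψ ∧ A.conJoin φ ψ = A.nabla ∧
    A.conMeet φ ψ = A.delta ∧ A.comp φ ψ = A.comp ψ φ

/-- Boolean congruences: complemented elements of the lattice `Con(A)`. -/
def IsBooleanCon (A : Alg σ) (φ : A.carrier → A.carrier → Prop) : Prop :=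
  A.IsCon φ ∧ ∃ ψ, A.IsCon ψ ∧ A.conJoin φ ψ = A.nabla ∧ A.conMeet φ ψ = A.delta

/-- `A` is congruence-distributive iff the lattice `Con(A)` is distributive. -/
def CongDistrib (A : Alg σ) : Prop :=
  ∀ r s t, A.IsCon r → A.IsCon s → A.IsCon t →
    A.conMeet r (A.conJoin s t) = A.conJoin (A.conMeet r s) (A.conMeet r t)

/-- `A` is congruence-permutable iff all congruences permute under composition. -/
def CongPermutable (A : Alg σ) : Prop :=
  ∀ r s, A.IsCon r → A.IsCon s → A.comp r s = A.comp s r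

/-- Arithmetical = congruence-distributive + congruence-permutable. -/
def Arithmetical (A : Alg σ) : Prop := A.CongDistrib ∧ A.CongPermutable

/-- The quotient algebra `A/θ`. -/
noncomputable def quotAlg (A : Alg σ) (θ : A.carrier → A.carrier → Prop) :
    Alg σ where
  carrier := Quot θ
  interp f x := Quot.mk θ (A.interp f fun i => (x i).out)

/-- The image `α/θ = {(a/θ, b/θ) : (a,b) ∈ α}` of a relation in the quotient. -/
def quotRel (A : Alg σ) (θ α : A.carrier → A.carrier → Prop) :
    Quot θ → Quot θ → Prop := fun x y =>
  ∃ a b, x = Quot.mk θ a ∧ y = Quot.mk θ b ∧ α a b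

/-- `θ` has the Factor Congruence Lifting Property: the Boolean morphism
`FC(θ) : FC(A) → FC(A/θ)`, `ψ ↦ (ψ ∨ θ)/θ`, is surjective. -/
def HasFCLP (A : Alg σ) (θ : A.carrier → A.carrier → Prop) : Prop :=
  ∀ γ, (A.quotAlg θ).IsFC γ →
    ∃ ψ, A.IsFC ψ ∧ A.quotRel θ (A.conJoin ψ θ) = γ

/-- `θ` has the Congruence Boolean Lifting Property: the Boolean morphism
`B(Con(A)) → B(Con(A/θ))`, `ψ ↦ (ψ ∨ θ)/θ`, is surjective. -/
def HasCBLP (A : Alg σ) (θ : A.carrier → A.carrier → Prop) : Prop :=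
  ∀ γ, (A.quotAlg θ).IsBooleanCon γ →
    ∃ ψ, A.IsBooleanCon ψ ∧ A.quotRel θ (A.conJoin ψ θ) = γ

/-- `A` has FCLP iff every congruence of `A` has FCLP. -/
def AlgFCLP (A : Alg σ) : Prop := ∀ θ, A.IsCon θ → A.HasFCLP θ

/-- `A` has CBLP iff every congruence of `A` has CBLP. -/
def AlgCBLP (A : Alg σ) : Prop := ∀ θ, A.IsCon θ → A.HasCBLP θ

/-- FC-normality. -/
def FCNormal (A : Alg σ) : Prop :=
  ∀ φ ψ, A.IsCon φ → A.IsCon ψ → A.comp φ ψ = A.nabla →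
    ∃ α β, A.IsFC α ∧ A.IsFC β ∧ A.conMeet α β = A.delta ∧
      A.comp φ α = A.nabla ∧ A.comp ψ β = A.nabla

/-- B-normality. -/
def BNormal (A : Alg σ) : Prop :=
  ∀ φ ψ, A.IsCon φ → A.IsCon ψ → A.conJoin φ ψ = A.nabla →
    ∃ α β, A.IsBooleanCon α ∧ A.IsBooleanCon β ∧ A.conMeet α β = A.delta ∧
      A.conJoin φ α = A.nabla ∧ A.conJoin ψ β = A.nabla

/-- Isomorphism of algebras. -/
def Iso (A B : Alg σ) : Prop :=
  ∃ e : A.carrier ≃ B.carrier,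
    ∀ (f : σ.ops) (x : Fin (σ.arity f) → A.carrier),
      e (A.interp f x) = B.interp f fun i => e (x i)

/-- Direct product of a finite family of algebras. -/
def prodAlg {n : ℕ} (B : Fin n → Alg σ) : Alg σ where
  carrier := ∀ i, (B i).carrier
  interp f x := fun i => (B i).interp f fun j => x j i

/-- The product congruence `θ₁ × … × θₙ`. -/
def prodRel {n : ℕ} (B : Fin n → Alg σ)
    (θ : ∀ i, (B i).carrier → (B i).carrier → Prop) :
    (prodAlg B).carrier → (prodAlg B).carrier → Prop :=
  fun x y => ∀ i, θ i (x i) (y i)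

/-- Maximal congruences: maximal elements of `(Con(A) \ {∇}, ⊆)`. -/
def IsMaxCon (A : Alg σ) (θ : A.carrier → A.carrier → Prop) : Prop :=
  A.IsCon θ ∧ θ ≠ A.nabla ∧
    ∀ ψ, A.IsCon ψ → ψ ≠ A.nabla → (∀ a b, θ a b → ψ a b) → ψ = θ

/-- Prime congruences. -/
def IsPrimeCon (A : Alg σ) (θ : A.carrier → A.carrier → Prop) : Prop :=
  A.IsCon θ ∧ ∀ α β, A.IsCon α → A.IsCon β →
    (∀ a b, α a b → β a b → θ a b) →
    (∀ a b, α a b → θ a b) ∨ ∀ a b, β a b → θ a b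

end Alg

/-!
Two congruences `φ, ψ` with `φ ∘ ψ = ∇` become a permuting complementary pair modulo
`θ = φ ∩ ψ`, so `φ/θ` is a factor congruence of `A/θ` with complement `ψ/θ`; everything else is
computation in the distributive lattice `Con(A)`.

If `A` has FCLP, lift `φ/θ` to a factor pair `(β, α)` of `A` with `β ∨ θ = φ`; then `β ⊆ φ`,
and `α ⊆ ψ` because `α ∩ β = Δ` while `β ∨ ψ ⊇ φ ∨ ψ = ∇`. Conversely, if `A` is FC-normal and
`(γ, γ')` is a factor pair of `A/θ`, apply FC-normality to their preimages `φ, ψ`: the resulting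
`β` satisfies `β ∨ θ = φ`, since `β ⊆ φ` (as `α ∩ β = Δ`, `φ ∨ α = ∇`) and
`φ ⊆ β ∨ (φ ∩ ψ)` (as `ψ ∨ β = ∇`).
-/

section DistribLattice

variable {L : Type*} [DistribLattice L] [BoundedOrder L] {a b c d : L}

theorem le_of_disjoint_of_sup_inf_eq (hab : Disjoint a b) (hcd : Codisjoint c d)
    (hb : b ⊔ c ⊓ d = c) : a ≤ d := by
  refine hab.le_of_codisjoint (codisjoint_iff_le_sup.mpr ?_)
  calc ⊤ ≤ c ⊔ d := hcd.top_le
    _ = b ⊔ c ⊓ d ⊔ d := by rw [hb]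
    _ ≤ b ⊔ d := sup_le (sup_le le_sup_left (inf_le_right.trans le_sup_right)) le_sup_right

theorem sup_inf_eq_of_disjoint_of_codisjoint (hab : Disjoint a b) (hca : Codisjoint c a)
    (hdb : Codisjoint d b) : b ⊔ c ⊓ d = c :=
  le_antisymm (sup_le (hab.symm.le_of_codisjoint hca.symm) inf_le_left)
    (Codisjoint.left_le_of_le_inf_right le_sup_right (hdb.mono_right le_sup_left))

end DistribLattice

namespace Alg

variable {σ : Signature} {A : Alg σ}

section Relations

variable {r r' s s' : A.carrier → A.carrier → Prop}

theorem eq_nabla_iff : r = A.nabla ↔ ∀ a b, r a b :=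
  ⟨fun h _ _ => h ▸ trivial, fun h => funext₂ fun a b => propext ⟨fun _ => trivial, fun _ => h a b⟩⟩

theorem delta_isCon : A.IsCon A.delta :=
  ⟨⟨fun _ => rfl, Eq.symm, Eq.trans⟩, fun _ _ _ h => congrArg _ (funext h)⟩

theorem nabla_isCon : A.IsCon A.nabla :=
  ⟨⟨fun _ => trivial, fun _ => trivial, fun _ _ => trivial⟩, fun _ _ _ _ => trivial⟩

theorem meet_isCon (hr : A.IsCon r) (hs : A.IsCon s) : A.IsCon (A.conMeet r s) :=
  ⟨⟨fun a => ⟨hr.1.refl a, hs.1.refl a⟩, fun h => ⟨hr.1.symm h.1, hs.1.symm h.2⟩,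
      fun h h' => ⟨hr.1.trans h.1 h'.1, hs.1.trans h.2 h'.2⟩⟩,
    fun f x y h => ⟨hr.2 f x y fun i => (h i).1, hs.2 f x y fun i => (h i).2⟩⟩

theorem join_isCon (r s : A.carrier → A.carrier → Prop) : A.IsCon (A.conJoin r s) :=
  ⟨⟨fun a _ ht _ _ => ht.1.refl a, fun h t ht h₁ h₂ => ht.1.symm (h t ht h₁ h₂),
      fun h h' t ht h₁ h₂ => ht.1.trans (h t ht h₁ h₂) (h' t ht h₁ h₂)⟩,
    fun f x y h t ht h₁ h₂ => ht.2 f x y fun i => h i t ht h₁ h₂⟩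

theorem conMeet_comm (r s : A.carrier → A.carrier → Prop) : A.conMeet r s = A.conMeet s r :=
  funext₂ fun _ _ => propext and_comm

theorem left_le_conJoin (r s : A.carrier → A.carrier → Prop) : r ≤ A.conJoin r s :=
  fun _ _ h _ _ h₁ _ => h₁ _ _ h

theorem right_le_conJoin (r s : A.carrier → A.carrier → Prop) : s ≤ A.conJoin r s :=
  fun _ _ h _ _ _ h₂ => h₂ _ _ h

theorem comp_le_conJoin (r s : A.carrier → A.carrier → Prop) : A.comp r s ≤ A.conJoin r s :=
  fun _ _ ⟨_, hs, hr⟩ _ ht h₁ h₂ => ht.1.trans (h₂ _ _ hs) (h₁ _ _ hr)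

theorem conJoin_eq_nabla_of_comp (h : A.comp r s = A.nabla) : A.conJoin r s = A.nabla :=
  eq_nabla_iff.mpr fun a b => comp_le_conJoin r s a b (h ▸ trivial)

theorem comp_eq_nabla_mono (hr : r ≤ r') (hs : s ≤ s') (h : A.comp r s = A.nabla) :
    A.comp r' s' = A.nabla :=
  eq_nabla_iff.mpr fun a b =>
    let ⟨x, hax, hxb⟩ := eq_nabla_iff.mp h a b
    ⟨x, hs a x hax, hr x b hxb⟩

theorem comp_eq_nabla_symm (hr : A.IsCon r) (hs : A.IsCon s) (h : A.comp r s = A.nabla) :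
    A.comp s r = A.nabla :=
  eq_nabla_iff.mpr fun a b =>
    let ⟨x, hbx, hxa⟩ := eq_nabla_iff.mp h b a
    ⟨x, hr.1.symm hxa, hs.1.symm hbx⟩

theorem isCon_comp (hr : A.IsCon r) (hs : A.IsCon s) (hperm : A.comp r s = A.comp s r) :
    A.IsCon (A.comp r s) := by
  refine ⟨⟨fun a => ⟨a, hs.1.refl a, hr.1.refl a⟩, ?_, ?_⟩, ?_⟩
  · rintro a b ⟨x, hax, hxb⟩
    exact hperm ▸ ⟨x, hr.1.symm hxb, hs.1.symm hax⟩
  · rintro a b c ⟨x, hax, hxb⟩ ⟨y, hby, hyc⟩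
    obtain ⟨z, hxz, hzy⟩ : A.comp r s x y := hperm ▸ ⟨b, hxb, hby⟩
    exact ⟨z, hs.1.trans hax hxz, hr.1.trans hzy hyc⟩
  · intro f x y h
    choose z hxz hzy using h
    exact ⟨A.interp f z, hs.2 f x z hxz, hr.2 f z y hzy⟩

theorem comp_eq_nabla_of_conJoin (hr : A.IsCon r) (hs : A.IsCon s)
    (hperm : A.comp r s = A.comp s r) (hjoin : A.conJoin r s = A.nabla) :
    A.comp r s = A.nabla :=
  eq_nabla_iff.mpr fun a b =>
    eq_nabla_iff.mp hjoin a b _ (isCon_comp hr hs hperm)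
      (fun x _ hxy => ⟨x, hs.1.refl x, hxy⟩) (fun _ y hxy => ⟨y, hxy, hr.1.refl y⟩)

theorem isFC_iff {φ : A.carrier → A.carrier → Prop} :
    A.IsFC φ ↔ A.IsCon φ ∧
      ∃ ψ, A.IsCon ψ ∧ A.conMeet φ ψ = A.delta ∧ A.comp φ ψ = A.nabla := by
  constructor
  · rintro ⟨hφ, ψ, hψ, hjoin, hmeet, hperm⟩
    exact ⟨hφ, ψ, hψ, hmeet, comp_eq_nabla_of_conJoin hφ hψ hperm hjoin⟩
  · rintro ⟨hφ, ψ, hψ, hmeet, hcomp⟩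
    exact ⟨hφ, ψ, hψ, conJoin_eq_nabla_of_comp hcomp, hmeet,
      hcomp.trans (comp_eq_nabla_symm hφ hψ hcomp).symm⟩

end Relations

@[ext]
structure Congruence (A : Alg σ) where
  rel : A.carrier → A.carrier → Prop
  isCon : A.IsCon rel

namespace Congruence

instance : PartialOrder A.Congruence := PartialOrder.lift rel fun _ _ => Congruence.ext

instance : Lattice A.Congruence where
  sup x y := ⟨A.conJoin x.rel y.rel, join_isCon _ _⟩
  inf x y := ⟨A.conMeet x.rel y.rel, meet_isCon x.isCon y.isCon⟩
  le_sup_left x y := left_le_conJoin x.rel y.rel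
  le_sup_right x y := right_le_conJoin x.rel y.rel
  sup_le _ _ z hx hy _ _ h := h _ z.isCon hx hy
  inf_le_left _ _ _ _ h := h.1
  inf_le_right _ _ _ _ h := h.2
  le_inf _ _ _ hy hz a b h := ⟨hy a b h, hz a b h⟩

instance : BoundedOrder A.Congruence where
  top := ⟨A.nabla, nabla_isCon⟩
  le_top _ _ _ _ := trivial
  bot := ⟨A.delta, delta_isCon⟩
  bot_le x a _ h := (h : a = _) ▸ x.isCon.1.refl a

/-- Not an instance: distributivity is a hypothesis on `A`. -/
abbrev distribLattice (hcd : A.CongDistrib) : DistribLattice A.Congruence :=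
  DistribLattice.ofInfSupLe fun x y z => (hcd x.rel y.rel z.rel x.isCon y.isCon z.isCon).le

theorem disjoint_iff {x y : A.Congruence} : Disjoint x y ↔ A.conMeet x.rel y.rel = A.delta :=
  _root_.disjoint_iff.trans Congruence.ext_iff

theorem codisjoint_of_comp_eq_nabla {x y : A.Congruence} (h : A.comp x.rel y.rel = A.nabla) :
    Codisjoint x y :=
  codisjoint_iff.mpr (Congruence.ext (conJoin_eq_nabla_of_comp h))

end Congruence

section Quotient

variable {θ : A.carrier → A.carrier → Prop}

theorem mk_eq_mk_iff (hθ : A.IsCon θ) {a b : A.carrier} : Quot.mk θ a = Quot.mk θ b ↔ θ a b :=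
  ⟨fun h => (Equivalence.eqvGen_iff hθ.1).mp (Quot.eq.mp h), Quot.sound⟩

def comap (A : Alg σ) (θ : A.carrier → A.carrier → Prop) (γ : Quot θ → Quot θ → Prop) :
    A.carrier → A.carrier → Prop :=
  fun a b => γ (Quot.mk θ a) (Quot.mk θ b)

theorem mk_interp (hθ : A.IsCon θ) (f : σ.ops) (x : Fin (σ.arity f) → A.carrier) :
    Quot.mk θ (A.interp f x) = (A.quotAlg θ).interp f fun i => Quot.mk θ (x i) :=
  (mk_eq_mk_iff hθ).mpr <| hθ.2 f _ _ fun _ => (mk_eq_mk_iff hθ).mp (Quot.out_eq _).symm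

theorem comap_isCon (hθ : A.IsCon θ) {γ : Quot θ → Quot θ → Prop} (hγ : (A.quotAlg θ).IsCon γ) :
    A.IsCon (A.comap θ γ) := by
  refine ⟨⟨fun _ => hγ.1.refl _, hγ.1.symm, hγ.1.trans⟩, fun f x y h => ?_⟩
  show γ (Quot.mk θ (A.interp f x)) (Quot.mk θ (A.interp f y))
  rw [mk_interp hθ, mk_interp hθ]
  exact hγ.2 f _ _ h

theorem quotRel_comap (γ : Quot θ → Quot θ → Prop) : A.quotRel θ (A.comap θ γ) = γ := by
  funext x y
  induction x using Quot.ind with | _ a =>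
  induction y using Quot.ind with | _ b =>
  exact propext ⟨fun ⟨a', b', ha, hb, h⟩ => ha ▸ hb ▸ h, fun h => ⟨a, b, rfl, rfl, h⟩⟩

theorem comap_delta (hθ : A.IsCon θ) : A.comap θ (A.quotAlg θ).delta = θ :=
  funext₂ fun _ _ => propext (mk_eq_mk_iff hθ)

theorem comp_comap_eq_nabla {γ γ' : Quot θ → Quot θ → Prop}
    (h : (A.quotAlg θ).comp γ γ' = (A.quotAlg θ).nabla) :
    A.comp (A.comap θ γ) (A.comap θ γ') = A.nabla := by
  refine eq_nabla_iff.mpr fun a b => ?_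
  obtain ⟨ξ, h₁, h₂⟩ := eq_nabla_iff.mp h (Quot.mk θ a) (Quot.mk θ b)
  induction ξ using Quot.ind with | _ c =>
  exact ⟨c, h₁, h₂⟩

variable {α : A.carrier → A.carrier → Prop}

theorem quotRel_mk_iff (hθ : A.IsCon θ) (hα : A.IsCon α) (hθα : θ ≤ α) {a b : A.carrier} :
    A.quotRel θ α (Quot.mk θ a) (Quot.mk θ b) ↔ α a b := by
  refine ⟨fun ⟨a', b', ha, hb, h⟩ => ?_, fun h => ⟨a, b, rfl, rfl, h⟩⟩
  have haa' : α a a' := hθα _ _ ((mk_eq_mk_iff hθ).mp ha)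
  have hb'b : α b' b := hθα _ _ ((mk_eq_mk_iff hθ).mp hb.symm)
  exact hα.1.trans (hα.1.trans haa' h) hb'b

theorem quotRel_isCon (hθ : A.IsCon θ) (hα : A.IsCon α) (hθα : θ ≤ α) :
    (A.quotAlg θ).IsCon (A.quotRel θ α) := by
  have hout : ∀ x y, A.quotRel θ α x y → α x.out y.out := fun x y h => by
    rw [← Quot.out_eq x, ← Quot.out_eq y] at h
    exact (quotRel_mk_iff hθ hα hθα).mp h
  refine ⟨⟨fun x => ?_, fun ⟨a, b, ha, hb, h⟩ => ⟨b, a, hb, ha, hα.1.symm h⟩, fun h₁ h₂ => ?_⟩,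
    fun f x y h => ⟨_, _, rfl, rfl, hα.2 f _ _ fun i => hout _ _ (h i)⟩⟩
  · induction x using Quot.ind with | _ a =>
    exact ⟨a, a, rfl, rfl, hα.1.refl a⟩
  · obtain ⟨a, b, rfl, rfl, hab⟩ := h₁
    obtain ⟨b', c, hb', rfl, hbc⟩ := h₂
    exact ⟨a, c, rfl, rfl, hα.1.trans (hα.1.trans hab (hθα _ _ ((mk_eq_mk_iff hθ).mp hb'))) hbc⟩

end Quotient

variable {φ ψ : A.carrier → A.carrier → Prop}

theorem isFC_quotRel_conMeet (hφ : A.IsCon φ) (hψ : A.IsCon ψ) (h : A.comp φ ψ = A.nabla) :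
    (A.quotAlg (A.conMeet φ ψ)).IsFC (A.quotRel (A.conMeet φ ψ) φ) := by
  have hθ := meet_isCon hφ hψ
  refine isFC_iff.mpr ⟨quotRel_isCon hθ hφ fun _ _ h => h.1,
    A.quotRel (A.conMeet φ ψ) ψ, quotRel_isCon hθ hψ fun _ _ h => h.2, ?_, ?_⟩
  · funext x y
    induction x using Quot.ind with | _ a =>
    induction y using Quot.ind with | _ b =>
    exact propext <| (and_congr (quotRel_mk_iff hθ hφ fun _ _ h => h.1)
      (quotRel_mk_iff hθ hψ fun _ _ h => h.2)).trans (mk_eq_mk_iff hθ).symm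
  · refine eq_nabla_iff.mpr fun x y => ?_
    obtain ⟨c, hac, hcb⟩ := eq_nabla_iff.mp h x.out y.out
    exact ⟨Quot.mk _ c, ⟨_, c, (Quot.out_eq x).symm, rfl, hac⟩,
      ⟨c, _, rfl, (Quot.out_eq y).symm, hcb⟩⟩

theorem AlgFCLP.fcNormal (hcd : A.CongDistrib) (hA : A.AlgFCLP) : A.FCNormal := by
  let := Congruence.distribLattice hcd
  intro φ ψ hφ hψ hφψ
  have hθ := meet_isCon hφ hψ
  obtain ⟨β, hβFC, hlift⟩ := hA _ hθ _ (isFC_quotRel_conMeet hφ hψ hφψ)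
  obtain ⟨hβ, α, hα, hβα_meet, hβα_comp⟩ := isFC_iff.mp hβFC
  have hβθ : A.conJoin β (A.conMeet φ ψ) = φ := funext₂ fun a b => propext <| by
    rw [← quotRel_mk_iff hθ (join_isCon _ _) (right_le_conJoin _ _), hlift,
      quotRel_mk_iff hθ hφ fun _ _ h => h.1]
  have hβφ : β ≤ φ := hβθ ▸ left_le_conJoin _ _
  have hαψ : α ≤ ψ := le_of_disjoint_of_sup_inf_eq (a := ⟨α, hα⟩) (b := ⟨β, hβ⟩)
    (c := ⟨φ, hφ⟩) (d := ⟨ψ, hψ⟩) (Congruence.disjoint_iff.mpr hβα_meet).symm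
    (Congruence.codisjoint_of_comp_eq_nabla hφψ) (Congruence.ext hβθ)
  have hαβ_comp := comp_eq_nabla_symm hβ hα hβα_comp
  exact ⟨α, β, isFC_iff.mpr ⟨hα, β, hβ, conMeet_comm α β ▸ hβα_meet, hαβ_comp⟩, hβFC,
    conMeet_comm α β ▸ hβα_meet, comp_eq_nabla_mono hβφ le_rfl hβα_comp,
    comp_eq_nabla_mono hαψ le_rfl hαβ_comp⟩

theorem FCNormal.algFCLP (hcd : A.CongDistrib) (hA : A.FCNormal) : A.AlgFCLP := by
  let := Congruence.distribLattice hcd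
  intro θ hθ γ hγFC
  obtain ⟨hγ, γ', hγ', hγγ'_meet, hγγ'_comp⟩ := isFC_iff.mp hγFC
  have hφ := comap_isCon hθ hγ
  have hψ := comap_isCon hθ hγ'
  obtain ⟨α, β, hαFC, hβFC, hαβ, hφα, hψβ⟩ := hA _ _ hφ hψ (comp_comap_eq_nabla hγγ'_comp)
  have hφψ : A.conMeet (A.comap θ γ) (A.comap θ γ') = θ :=
    (congrArg (A.comap θ) hγγ'_meet).trans (comap_delta hθ)
  have hβθ : A.conJoin β θ = A.comap θ γ := calc
    A.conJoin β θ = A.conJoin β (A.conMeet (A.comap θ γ) (A.comap θ γ')) := by rw [hφψ]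
    _ = A.comap θ γ := congrArg Congruence.rel <| sup_inf_eq_of_disjoint_of_codisjoint
      (a := ⟨α, hαFC.1⟩) (b := ⟨β, hβFC.1⟩) (c := ⟨_, hφ⟩) (d := ⟨_, hψ⟩)
      (Congruence.disjoint_iff.mpr hαβ) (Congruence.codisjoint_of_comp_eq_nabla hφα)
      (Congruence.codisjoint_of_comp_eq_nabla hψβ)
  exact ⟨β, hβFC, hβθ ▸ quotRel_comap γ⟩

end Alg

theorem stmt_8_general {σ : Signature} (A : Alg σ)
    (hcd : A.CongDistrib) : A.AlgFCLP ↔ A.FCNormal :=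
  ⟨fun h => h.fcNormal hcd, fun h => h.algFCLP hcd⟩

/-- A congruence-distributive algebra has FCLP iff it is FC-normal. -/
theorem stmt_8 {σ : Signature} (A : Alg σ) (hne : Nonempty A.carrier)
    (hcd : A.CongDistrib) : A.AlgFCLP ↔ A.FCNormal :=
  stmt_8_general A hcd
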